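/- arXiv:1211.6991 — 5 statements merged into one kernel-verified Lean document; each statement's English description precedes it below -/
import Mathlib

section
/- Let K be a field, let g be a Lie algebra over K, let h be a finite-dimensional Lie algebra over K, and let φ : g → h be a surjective Lie algebra homomorphism whose kernel is contained in the center of g. Then there exists a finite-dimensional Lie subalgebra W of g such that φ(W) = h. -/
/-- If `φ : g → h` is a surjective Lie algebra homomorphism onto a finite-dimensional Lie
algebra `h` whose kernel is contained in the center of `g`, then there is a
finite-dimensional Lie subalgebra `W` of `g` with `φ(W) = h`. -/
theorem exists_finiteDimensional_lieSubalgebra_map_eq_top {K : Type*} [Field K]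
    {g h : Type*} [LieRing g] [LieAlgebra K g] [LieRing h] [LieAlgebra K h]
    [FiniteDimensional K h] (φ : g →ₗ⁅K⁆ h) (hsurj : Function.Surjective φ)
    (hker : ∀ x : g, φ x = 0 → x ∈ LieAlgebra.center K g) :
    ∃ W : LieSubalgebra K g, FiniteDimensional K W ∧ W.map φ = ⊤ := by
  classical
  obtain ⟨T, hT⟩ := φ.toLinearMap.exists_rightInverse_of_surjective
    (LinearMap.range_eq_top.mpr hsurj)
  have hTapp : ∀ y : h, φ (T y) = y := fun y => congrArg (fun f => f y) hT
  -- the bilinear defect map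
  let B : h →ₗ[K] h →ₗ[K] g := LinearMap.mk₂ K (fun x y => ⁅T x, T y⁆ - T ⁅x, y⁆)
    (by intro m n y; simp [add_lie, lie_add]; abel)
    (by intro c m y; simp [smul_lie, lie_smul, smul_sub])
    (by intro m n y; simp [add_lie, lie_add]; abel)
    (by intro c m y; simp [smul_lie, lie_smul, smul_sub])
  let C : Submodule K g := LinearMap.range (TensorProduct.lift B)
  have hBcenter : ∀ x y : h, B x y ∈ LieAlgebra.center K g := by
    intro x y
    apply hker
    simp [B, hTapp]
  have hCcenter : ∀ c ∈ C, ∀ z : g, ⁅z, c⁆ = 0 := by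
    intro c hc
    obtain ⟨t, rfl⟩ := hc
    induction t using TensorProduct.induction_on with
    | zero => simp
    | tmul x y =>
        intro z
        have := hBcenter x y
        rw [LieModule.mem_maxTrivSubmodule] at this
        simpa using this z
    | add a b ha hb => intro z; simp [map_add, lie_add, ha z, hb z]
  let Wsub : Submodule K g := LinearMap.range T ⊔ C
  have hlie : ∀ a ∈ Wsub, ∀ b ∈ Wsub, ⁅a, b⁆ ∈ Wsub := by
    intro a ha b hb
    rw [Submodule.mem_sup] at ha hb
    obtain ⟨ta, ⟨x, rfl⟩, ca, hca, rfl⟩ := ha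
    obtain ⟨tb, ⟨y, rfl⟩, cb, hcb, rfl⟩ := hb
    have h1 : ⁅T x + ca, T y + cb⁆ = ⁅T x, T y⁆ := by
      have hca' : ∀ z : g, ⁅ca, z⁆ = 0 := fun z => by
        have := hCcenter ca hca z
        rw [← lie_skew, neg_eq_zero] at this
        exact this
      rw [lie_add, add_lie, add_lie, hCcenter cb hcb (T x), hCcenter cb hcb ca,
        hca' (T y)]
      abel
    rw [h1]
    have h2 : ⁅T x, T y⁆ = T ⁅x, y⁆ + B x y := by simp [B]
    rw [h2]
    apply Submodule.add_mem
    · exact Submodule.mem_sup_left ⟨⁅x, y⁆, rfl⟩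
    · exact Submodule.mem_sup_right ⟨x ⊗ₜ y, by simp⟩
  let W : LieSubalgebra K g :=
    { Wsub with lie_mem' := fun {a b} ha hb => hlie a ha b hb }
  refine ⟨W, ?_, ?_⟩
  · have : FiniteDimensional K Wsub := by
      have : FiniteDimensional K (LinearMap.range T) := inferInstance
      have : FiniteDimensional K C := inferInstance
      exact Submodule.finiteDimensional_sup _ _
    exact this
  · rw [eq_top_iff]
    intro y _
    exact ⟨T y, Submodule.mem_sup_left ⟨y, rfl⟩, hTapp y⟩
end

section
/- Fix n ≥ 1 and real constants k. On the open set U = { (x,p) ∈ ℝⁿ × ℝⁿ : x_i ≠ 0 for all i }, define h₁(x,p) = (1/2) Σᵢ x_i², h₂(x,p) = −(1/2) Σᵢ x_i p_i, and h₃(x,p) = (1/2) Σᵢ ( p_i² + k / x_i² ). Then, with respect to the canonical Poisson bracket, the identities {h₁,h₃} = −2 h₂, {h₁,h₂} = −h₁, and {h₂,h₃} = −h₃ hold at every point of U. In particular h₁, h₂, h₃ span a Lie algebra isomorphic to sl(2,ℝ). -/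
open scoped BigOperators

/-- The canonical Poisson bracket of two functions on `ℝⁿ × ℝⁿ` (coordinates `(x, p)`):
`{f,g} = ∑ i, (∂f/∂xᵢ · ∂g/∂pᵢ − ∂f/∂pᵢ · ∂g/∂xᵢ)`. -/
noncomputable def canonicalPoissonBracket (n : ℕ)
    (f g : (Fin n → ℝ) × (Fin n → ℝ) → ℝ)
    (z : (Fin n → ℝ) × (Fin n → ℝ)) : ℝ :=
  ∑ i : Fin n,
    (fderiv ℝ f z (Pi.single i 1, 0) * fderiv ℝ g z (0, Pi.single i 1) -
      fderiv ℝ f z (0, Pi.single i 1) * fderiv ℝ g z (Pi.single i 1, 0))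

/-!
Each Hamiltonian is differentiable at `z` with an explicit gradient `(∂ₓh, ∂ₚh)`: `(x, 0)` for `h₁`,
`(-p/2, -x/2)` for `h₂` and `(-k/x³, p)` for `h₃` (this is where `xᵢ ≠ 0` enters). The brackets
then become sums of coordinatewise rational identities.
-/

namespace PhaseSpace

variable {n : ℕ}

noncomputable def covector (a b : Fin n → ℝ) : ((Fin n → ℝ) × (Fin n → ℝ)) →L[ℝ] ℝ :=
  ∑ j, (a j • (ContinuousLinearMap.proj j).comp (ContinuousLinearMap.fst ℝ _ _) +
    b j • (ContinuousLinearMap.proj j).comp (ContinuousLinearMap.snd ℝ _ _))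

theorem covector_apply (a b : Fin n → ℝ) (v : (Fin n → ℝ) × (Fin n → ℝ)) :
    covector a b v = ∑ j, (a j * v.1 j + b j * v.2 j) := by
  simp [covector]

@[simp]
theorem covector_apply_single_fst (a b : Fin n → ℝ) (i : Fin n) :
    covector a b (Pi.single i 1, 0) = a i := by
  simp [covector_apply, Pi.single_apply]

@[simp]
theorem covector_apply_single_snd (a b : Fin n → ℝ) (i : Fin n) :
    covector a b (0, Pi.single i 1) = b i := by
  simp [covector_apply, Pi.single_apply]

theorem canonicalPoissonBracket_eq_sum {f g : (Fin n → ℝ) × (Fin n → ℝ) → ℝ}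
    {z : (Fin n → ℝ) × (Fin n → ℝ)} {a b c d : Fin n → ℝ}
    (hf : HasFDerivAt f (covector a b) z) (hg : HasFDerivAt g (covector c d) z) :
    canonicalPoissonBracket n f g z = ∑ i, (a i * d i - b i * c i) := by
  simp [canonicalPoissonBracket, hf.fderiv, hg.fderiv]

theorem hasFDerivAt_fst_apply (z : (Fin n → ℝ) × (Fin n → ℝ)) (i : Fin n) :
    HasFDerivAt (fun w : (Fin n → ℝ) × (Fin n → ℝ) => w.1 i)
      (covector (Pi.single i 1) 0) z := by
  convert (covector (Pi.single i 1) 0).hasFDerivAt using 1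
  ext w
  simp [covector_apply, Pi.single_apply]

theorem hasFDerivAt_snd_apply (z : (Fin n → ℝ) × (Fin n → ℝ)) (i : Fin n) :
    HasFDerivAt (fun w : (Fin n → ℝ) × (Fin n → ℝ) => w.2 i)
      (covector 0 (Pi.single i 1)) z := by
  convert (covector 0 (Pi.single i 1)).hasFDerivAt using 1
  ext w
  simp [covector_apply, Pi.single_apply]

theorem hasFDerivAt_half_sum_sq_fst (z : (Fin n → ℝ) × (Fin n → ℝ)) :
    HasFDerivAt (fun w : (Fin n → ℝ) × (Fin n → ℝ) => (1 / 2) * ∑ i, (w.1 i) ^ 2)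
      (covector z.1 0) z :=
  ((HasFDerivAt.fun_sum fun i _ => (hasFDerivAt_fst_apply z i).pow 2).const_mul
    (1 / 2 : ℝ)).congr_fderiv <| ContinuousLinearMap.ext fun v => by
      simp only [one_div, Nat.add_one_sub_one, pow_one, nsmul_eq_mul, Nat.cast_ofNat, smul_apply,
        sum_apply, covector_apply, Pi.single_apply, ite_mul, one_mul, zero_mul, Pi.zero_apply,
        add_zero, Finset.sum_ite_eq', Finset.mem_univ, if_true, smul_eq_mul, Finset.mul_sum]
      exact Finset.sum_congr rfl fun i _ => by ring

theorem hasFDerivAt_neg_half_sum_mul (z : (Fin n → ℝ) × (Fin n → ℝ)) :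
    HasFDerivAt (fun w : (Fin n → ℝ) × (Fin n → ℝ) => -((1 / 2) * ∑ i, w.1 i * w.2 i))
      (covector (fun i => -(z.2 i / 2)) (fun i => -(z.1 i / 2))) z :=
  ((HasFDerivAt.fun_sum fun i _ => (hasFDerivAt_fst_apply z i).mul
    (hasFDerivAt_snd_apply z i)).const_mul (1 / 2 : ℝ)).neg.congr_fderiv <|
      ContinuousLinearMap.ext fun v => by
        simp only [one_div, neg_apply, smul_apply, sum_apply, add_apply, covector_apply,
          Pi.zero_apply, zero_mul, Pi.single_apply, ite_mul, one_mul, zero_add, Finset.sum_ite_eq',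
          Finset.mem_univ, if_true, smul_eq_mul, add_zero, Finset.mul_sum, ← Finset.sum_neg_distrib,
          neg_mul]
        exact Finset.sum_congr rfl fun i _ => by ring

theorem hasFDerivAt_half_sum_sq_snd_add_inv_sq (k : ℝ) (z : (Fin n → ℝ) × (Fin n → ℝ))
    (hz : ∀ i, z.1 i ≠ 0) :
    HasFDerivAt (fun w : (Fin n → ℝ) × (Fin n → ℝ) =>
        (1 / 2) * ∑ i, ((w.2 i) ^ 2 + k / (w.1 i) ^ 2))
      (covector (fun i => -(k / z.1 i ^ 3)) z.2) z :=
  ((HasFDerivAt.fun_sum fun i _ => ((hasFDerivAt_snd_apply z i).pow 2).add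
    (((hasDerivAt_const (z.1 i) k).div (hasDerivAt_pow 2 (z.1 i))
      (pow_ne_zero 2 (hz i))).comp_hasFDerivAt z (hasFDerivAt_fst_apply z i))).const_mul
    (1 / 2 : ℝ)).congr_fderiv <| ContinuousLinearMap.ext fun v => by
      simp only [one_div, Nat.add_one_sub_one, pow_one, nsmul_eq_mul, Nat.cast_ofNat, zero_mul,
        zero_sub, smul_apply, sum_apply, add_apply, covector_apply, Pi.zero_apply, Pi.single_apply,
        ite_mul, one_mul, zero_add, Finset.sum_ite_eq', Finset.mem_univ, if_true, smul_eq_mul,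
        add_zero, Finset.mul_sum, neg_mul]
      refine Finset.sum_congr rfl fun i _ => ?_
      field_simp [hz i]
      ring

end PhaseSpace

open PhaseSpace

theorem smorodinsky_winternitz_hamiltonians_sl2_general (n : ℕ) (k : ℝ)
    (h₁ h₂ h₃ : (Fin n → ℝ) × (Fin n → ℝ) → ℝ)
    (hh₁ : ∀ z, h₁ z = (1 / 2) * ∑ i : Fin n, (z.1 i) ^ 2)
    (hh₂ : ∀ z, h₂ z = -((1 / 2) * ∑ i : Fin n, z.1 i * z.2 i))
    (hh₃ : ∀ z, h₃ z = (1 / 2) * ∑ i : Fin n, ((z.2 i) ^ 2 + k / (z.1 i) ^ 2))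
    (z : (Fin n → ℝ) × (Fin n → ℝ)) (hz : ∀ i, z.1 i ≠ 0) :
    canonicalPoissonBracket n h₁ h₃ z = -2 * h₂ z ∧
    canonicalPoissonBracket n h₁ h₂ z = -h₁ z ∧
    canonicalPoissonBracket n h₂ h₃ z = -h₃ z := by
  obtain rfl : h₁ = _ := funext hh₁
  obtain rfl : h₂ = _ := funext hh₂
  obtain rfl : h₃ = _ := funext hh₃
  have d₁ := hasFDerivAt_half_sum_sq_fst z
  have d₂ := hasFDerivAt_neg_half_sum_mul z
  have d₃ := hasFDerivAt_half_sum_sq_snd_add_inv_sq k z hz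
  rw [canonicalPoissonBracket_eq_sum d₁ d₃, canonicalPoissonBracket_eq_sum d₁ d₂,
    canonicalPoissonBracket_eq_sum d₂ d₃]
  refine ⟨?_, ?_, ?_⟩ <;>
    simp only [Pi.zero_apply, Finset.mul_sum, ← Finset.sum_neg_distrib] <;>
    refine Finset.sum_congr rfl fun i _ => ?_
  · ring
  · ring
  · field_simp [hz i]
    ring

/-- The Hamiltonian functions `h₁, h₂, h₃` of the Smorodinsky–Winternitz oscillator
satisfy `{h₁,h₃} = −2h₂`, `{h₁,h₂} = −h₁`, `{h₂,h₃} = −h₃` on the open set where all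
`xᵢ ≠ 0`, so they span a Lie algebra isomorphic to `sl(2,ℝ)`. -/
theorem smorodinsky_winternitz_hamiltonians_sl2 (n : ℕ) (hn : 1 ≤ n) (k : ℝ)
    (h₁ h₂ h₃ : (Fin n → ℝ) × (Fin n → ℝ) → ℝ)
    (hh₁ : ∀ z, h₁ z = (1 / 2) * ∑ i : Fin n, (z.1 i) ^ 2)
    (hh₂ : ∀ z, h₂ z = -((1 / 2) * ∑ i : Fin n, z.1 i * z.2 i))
    (hh₃ : ∀ z, h₃ z = (1 / 2) * ∑ i : Fin n, ((z.2 i) ^ 2 + k / (z.1 i) ^ 2))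
    (z : (Fin n → ℝ) × (Fin n → ℝ)) (hz : ∀ i, z.1 i ≠ 0) :
    canonicalPoissonBracket n h₁ h₃ z = -2 * h₂ z ∧
    canonicalPoissonBracket n h₁ h₂ z = -h₁ z ∧
    canonicalPoissonBracket n h₂ h₃ z = -h₃ z :=
  smorodinsky_winternitz_hamiltonians_sl2_general n k h₁ h₂ h₃ hh₁ hh₂ hh₃ z hz
end

section
/- Fix a real constant c₀. On the open set U = { (x,p) ∈ ℝ² : x ≠ 0 }, define h₁(x,p) = 4/x, h₂(x,p) = x p, and h₃(x,p) = (1/4) p² x³ + 4 c₀ x. Then, with respect to the canonical Poisson bracket {f,g} = ∂f/∂x · ∂g/∂p − ∂f/∂p · ∂g/∂x, the identities {h₁,h₃} = −2 h₂, {h₁,h₂} = −h₁, and {h₂,h₃} = −h₃ hold at every point of U. -/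
/-!
The bracket only sees the partial derivatives `∂ₓh` and `∂ₚh`, so once each Hamiltonian is given
its derivative `∂ₓh • dx + ∂ₚh • dp` in closed form, the three identities become identities of
rational functions in `x` and `p`.
-/

/-- The canonical Poisson bracket of two functions on `ℝ × ℝ` with coordinates `(x,p)`:
`{f,g} = ∂f/∂x · ∂g/∂p − ∂f/∂p · ∂g/∂x`. -/
noncomputable def poissonBracket2 (f g : ℝ × ℝ → ℝ) (z : ℝ × ℝ) : ℝ :=
  fderiv ℝ f z (1, 0) * fderiv ℝ g z (0, 1) -
    fderiv ℝ f z (0, 1) * fderiv ℝ g z (1, 0)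

open ContinuousLinearMap

section

variable {f g : ℝ × ℝ → ℝ} {z : ℝ × ℝ}

theorem poissonBracket2_eq_of_hasFDerivAt {fx fp gx gp : ℝ}
    (hf : HasFDerivAt f (fx • fst ℝ ℝ ℝ + fp • snd ℝ ℝ ℝ) z)
    (hg : HasFDerivAt g (gx • fst ℝ ℝ ℝ + gp • snd ℝ ℝ ℝ) z) :
    poissonBracket2 f g z = fx * gp - fp * gx := by
  simp [poissonBracket2, hf.fderiv, hg.fderiv]

theorem hasFDerivAt_const_div_fst (c : ℝ) (hz : z.1 ≠ 0) :
    HasFDerivAt (fun w : ℝ × ℝ => c / w.1)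
      ((-c / z.1 ^ 2) • fst ℝ ℝ ℝ + (0 : ℝ) • snd ℝ ℝ ℝ) z := by
  refine (((hasDerivAt_inv hz).comp_hasFDerivAt z (hasFDerivAt_fst (𝕜 := ℝ) (p := z))).const_mul
    c).congr_fderiv ?_
  ext <;> simp [div_eq_mul_inv]

theorem hasFDerivAt_fst_mul_snd :
    HasFDerivAt (fun w : ℝ × ℝ => w.1 * w.2) (z.2 • fst ℝ ℝ ℝ + z.1 • snd ℝ ℝ ℝ) z :=
  ((hasFDerivAt_fst (p := z)).mul (hasFDerivAt_snd (𝕜 := ℝ) (p := z))).congr_fderiv (add_comm _ _)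

theorem hasFDerivAt_const_mul_snd_sq_mul_fst_cube_add_const_mul_fst (a b : ℝ) :
    HasFDerivAt (fun w : ℝ × ℝ => a * w.2 ^ 2 * w.1 ^ 3 + b * w.1)
      ((3 * a * z.2 ^ 2 * z.1 ^ 2 + b) • fst ℝ ℝ ℝ + (2 * a * z.2 * z.1 ^ 3) • snd ℝ ℝ ℝ) z := by
  have hp := ((hasFDerivAt_snd (𝕜 := ℝ) (p := z)).pow 2).const_mul a
  have hx := (hasFDerivAt_fst (𝕜 := ℝ) (p := z)).pow 3
  refine ((hp.mul hx).add ((hasFDerivAt_fst (𝕜 := ℝ) (p := z)).const_mul b)).congr_fderiv ?_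
  ext <;> simp <;> ring

end

/-- The Hamiltonian functions `h₁ = 4/x`, `h₂ = xp`, `h₃ = p²x³/4 + 4c₀x` of the
second-order Kummer–Schwarz equation satisfy `{h₁,h₃} = −2h₂`, `{h₁,h₂} = −h₁`,
`{h₂,h₃} = −h₃` on the open set where `x ≠ 0`. -/
theorem kummer_schwarz_hamiltonians_sl2 (c₀ : ℝ) (h₁ h₂ h₃ : ℝ × ℝ → ℝ)
    (hh₁ : ∀ z : ℝ × ℝ, h₁ z = 4 / z.1)
    (hh₂ : ∀ z : ℝ × ℝ, h₂ z = z.1 * z.2)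
    (hh₃ : ∀ z : ℝ × ℝ, h₃ z = (1 / 4) * z.2 ^ 2 * z.1 ^ 3 + 4 * c₀ * z.1)
    (z : ℝ × ℝ) (hz : z.1 ≠ 0) :
    poissonBracket2 h₁ h₃ z = -2 * h₂ z ∧
    poissonBracket2 h₁ h₂ z = -h₁ z ∧
    poissonBracket2 h₂ h₃ z = -h₃ z := by
  obtain rfl : h₁ = fun z => 4 / z.1 := funext hh₁
  obtain rfl : h₂ = fun z => z.1 * z.2 := funext hh₂
  obtain rfl : h₃ = fun z => (1 / 4) * z.2 ^ 2 * z.1 ^ 3 + 4 * c₀ * z.1 := funext hh₃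
  have d₁ := hasFDerivAt_const_div_fst 4 hz
  have d₂ := hasFDerivAt_fst_mul_snd (z := z)
  have d₃ := hasFDerivAt_const_mul_snd_sq_mul_fst_cube_add_const_mul_fst (1 / 4) (4 * c₀) (z := z)
  rw [poissonBracket2_eq_of_hasFDerivAt d₁ d₃, poissonBracket2_eq_of_hasFDerivAt d₁ d₂,
    poissonBracket2_eq_of_hasFDerivAt d₂ d₃]
  refine ⟨?_, ?_, ?_⟩ <;> field_simp <;> ring
end

section
/- Fix n ≥ 1 and a real constant k. On the open set U = { (x,p) ∈ ℝⁿ × ℝⁿ : x_i ≠ 0 for all i }, define the vector fields X₁(x,p) = (0, −x), X₂(x,p) = (−x/2, p/2), and X₃(x,p) = (p, (k/x₁³, …, k/xₙ³)). Then their Lie brackets satisfy [X₁,X₃] = 2X₂, [X₁,X₂] = X₁, and [X₂,X₃] = X₃ at every point of U; hence X₁, X₂, X₃ span a Lie algebra of vector fields isomorphic to sl(2,ℝ). -/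
/-- The Lie bracket of two differentiable vector fields on a real normed space:
`[A,B](z) = DB(z)(A(z)) − DA(z)(B(z))`. -/
noncomputable def vectorFieldBracket {E : Type*} [NormedAddCommGroup E]
    [NormedSpace ℝ E] (A B : E → E) (z : E) : E :=
  fderiv ℝ B z (A z) - fderiv ℝ A z (B z)

/-!
`X₁` and `X₂` (`harmonicField`, `dilationField`) are linear, so each is its own derivative, and
`X₃(x, p) = (p, g x)` (`newtonField g`) has derivative `(v, w) ↦ (w, Dg(x) v)`. The brackets then
reduce to linear algebra, except that `[X₂, X₃] = X₃` needs Euler's identity `Dg(x) x = -3 g(x)`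
for the force `g(x)ᵢ = k / xᵢ³`, which is homogeneous of degree `-3`. So the relations hold for
every force satisfying that identity.
-/

open ContinuousLinearMap

theorem vectorFieldBracket_eq_of_hasFDerivAt {E : Type*} [NormedAddCommGroup E]
    [NormedSpace ℝ E] {A B : E → E} {A' B' : E →L[ℝ] E} {z : E}
    (hA : HasFDerivAt A A' z) (hB : HasFDerivAt B B' z) :
    vectorFieldBracket A B z = B' (A z) - A' (B z) := by
  rw [vectorFieldBracket, hA.fderiv, hB.fderiv]

theorem vectorFieldBracket_continuousLinearMap {E : Type*} [NormedAddCommGroup E]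
    [NormedSpace ℝ E] (L M : E →L[ℝ] E) (z : E) :
    vectorFieldBracket L M z = M (L z) - L (M z) :=
  vectorFieldBracket_eq_of_hasFDerivAt L.hasFDerivAt M.hasFDerivAt

theorem hasFDerivAt_pi_comp_apply {𝕜 ι : Type*} [NontriviallyNormedField 𝕜] [Fintype ι]
    {f : 𝕜 → 𝕜} {f' : ι → 𝕜} {x : ι → 𝕜} (hf : ∀ i, HasDerivAt f (f' i) (x i)) :
    HasFDerivAt (fun y i => f (y i)) (pi fun i => f' i • proj i : (ι → 𝕜) →L[𝕜] ι → 𝕜) x :=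
  hasFDerivAt_pi.2 fun i => (hf i).comp_hasFDerivAt x (hasFDerivAt_apply i x)

theorem hasDerivAt_const_div_pow_three (k : ℝ) {t : ℝ} (ht : t ≠ 0) :
    HasDerivAt (fun s => k / s ^ 3) (-3 * k / t ^ 4) t := by
  refine ((hasDerivAt_const t k).div (hasDerivAt_pow 3 t) (pow_ne_zero 3 ht)).congr_deriv ?_
  field_simp
  ring

theorem euler_const_div_pow_three {ι : Type*} [Fintype ι] (k : ℝ) {x : ι → ℝ}
    (hx : ∀ i, x i ≠ 0) :
    (pi fun i => (-3 * k / x i ^ 4) • proj i : (ι → ℝ) →L[ℝ] ι → ℝ) x =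
      (-3 : ℝ) • fun i => k / x i ^ 3 := by
  ext i
  simp only [pi_apply, smul_apply, proj_apply, smul_eq_mul, Pi.smul_apply]
  field_simp [hx i]

section SL2

variable {E : Type*} [NormedAddCommGroup E] [NormedSpace ℝ E]
  {g : E → E} {g' : E →L[ℝ] E} {z : E × E}

def harmonicField : E × E →L[ℝ] E × E := (0 : E × E →L[ℝ] E).prod (-fst ℝ E E)

noncomputable def dilationField : E × E →L[ℝ] E × E :=
  (-(1 / 2 : ℝ) • fst ℝ E E).prod ((1 / 2 : ℝ) • snd ℝ E E)

def newtonField (g : E → E) (w : E × E) : E × E := (w.2, g w.1)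

theorem hasFDerivAt_newtonField (hg : HasFDerivAt g g' z.1) :
    HasFDerivAt (newtonField g) ((snd ℝ E E).prod (g'.comp (fst ℝ E E))) z :=
  hasFDerivAt_snd.prodMk (hg.comp z hasFDerivAt_fst)

theorem vectorFieldBracket_harmonicField_newtonField (hg : HasFDerivAt g g' z.1) :
    vectorFieldBracket harmonicField (newtonField g) z = (2 : ℝ) • dilationField z := by
  rw [vectorFieldBracket_eq_of_hasFDerivAt harmonicField.hasFDerivAt (hasFDerivAt_newtonField hg)]
  ext <;> simp [harmonicField, dilationField, newtonField]

theorem vectorFieldBracket_harmonicField_dilationField :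
    vectorFieldBracket harmonicField dilationField z = harmonicField z := by
  rw [vectorFieldBracket_continuousLinearMap]
  ext
  · simp [harmonicField, dilationField]
  · simp [harmonicField, dilationField]
    module

theorem vectorFieldBracket_dilationField_newtonField (hg : HasFDerivAt g g' z.1)
    (hEuler : g' z.1 = (-3 : ℝ) • g z.1) :
    vectorFieldBracket dilationField (newtonField g) z = newtonField g z := by
  rw [vectorFieldBracket_eq_of_hasFDerivAt dilationField.hasFDerivAt (hasFDerivAt_newtonField hg)]
  ext <;> simp [dilationField, newtonField, hEuler] <;> module

end SL2

theorem smorodinsky_winternitz_vector_fields_sl2_general (n : ℕ) (k : ℝ)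
    (X₁ X₂ X₃ : (Fin n → ℝ) × (Fin n → ℝ) → (Fin n → ℝ) × (Fin n → ℝ))
    (hX₁ : ∀ z, X₁ z = (0, -z.1))
    (hX₂ : ∀ z, X₂ z = (-((1 / 2 : ℝ) • z.1), (1 / 2 : ℝ) • z.2))
    (hX₃ : ∀ z, X₃ z = (z.2, fun i => k / (z.1 i) ^ 3))
    (z : (Fin n → ℝ) × (Fin n → ℝ)) (hz : ∀ i, z.1 i ≠ 0) :
    vectorFieldBracket X₁ X₃ z = (2 : ℝ) • X₂ z ∧
    vectorFieldBracket X₁ X₂ z = X₁ z ∧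
    vectorFieldBracket X₂ X₃ z = X₃ z := by
  have h₁ : X₁ = harmonicField := funext fun w => by simp [hX₁, harmonicField]
  have h₂ : X₂ = dilationField := funext fun w => by simp [hX₂, dilationField]
  have h₃ : X₃ = newtonField fun x i => k / x i ^ 3 := funext hX₃
  have hg := hasFDerivAt_pi_comp_apply fun i => hasDerivAt_const_div_pow_three k (hz i)
  subst h₁ h₂ h₃
  exact ⟨vectorFieldBracket_harmonicField_newtonField hg,
    vectorFieldBracket_harmonicField_dilationField,
    vectorFieldBracket_dilationField_newtonField hg (euler_const_div_pow_three k hz)⟩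

/-- The Vessiot–Guldberg vector fields `X₁ = (0,−x)`, `X₂ = (−x/2, p/2)`,
`X₃ = (p, (k/x₁³,…,k/xₙ³))` of the Smorodinsky–Winternitz oscillator satisfy
`[X₁,X₃] = 2X₂`, `[X₁,X₂] = X₁`, `[X₂,X₃] = X₃` on the set where all `xᵢ ≠ 0`;
hence they span a Lie algebra of vector fields isomorphic to `sl(2,ℝ)`. -/
theorem smorodinsky_winternitz_vector_fields_sl2 (n : ℕ) (hn : 1 ≤ n) (k : ℝ)
    (X₁ X₂ X₃ : (Fin n → ℝ) × (Fin n → ℝ) → (Fin n → ℝ) × (Fin n → ℝ))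
    (hX₁ : ∀ z, X₁ z = (0, -z.1))
    (hX₂ : ∀ z, X₂ z = (-((1 / 2 : ℝ) • z.1), (1 / 2 : ℝ) • z.2))
    (hX₃ : ∀ z, X₃ z = (z.2, fun i => k / (z.1 i) ^ 3))
    (z : (Fin n → ℝ) × (Fin n → ℝ)) (hz : ∀ i, z.1 i ≠ 0) :
    vectorFieldBracket X₁ X₃ z = (2 : ℝ) • X₂ z ∧
    vectorFieldBracket X₁ X₂ z = X₁ z ∧
    vectorFieldBracket X₂ X₃ z = X₃ z :=
  smorodinsky_winternitz_vector_fields_sl2_general n k X₁ X₂ X₃ hX₁ hX₂ hX₃ z hz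
end

section
/- Fix a real constant k. On the open set U = { (x₁,x₂,p₁,p₂) ∈ ℝ⁴ : x₁ ≠ 0 and x₂ ≠ 0 }, define the vector fields X₁ = (0, 0, −x₁, −x₂), X₂ = (−x₁/2, −x₂/2, p₁/2, p₂/2), X₃ = (p₁, p₂, k/x₁³, k/x₂³), and Y with components Y = ( 2(x₁p₂−p₁x₂)x₂, −2(x₁p₂−p₁x₂)x₁, 2[(x₁p₂−p₁x₂)p₂ + k(x₁⁴−x₂⁴)/(x₁³x₂²)], −2[(x₁p₂−p₁x₂)p₁ + k(x₁⁴−x₂⁴)/(x₂³x₁²)] ). Then [Y,X₁] = [Y,X₂] = [Y,X₃] = 0 at every point of U; that is, Y is a t-independent Lie symmetry of the two-dimensional Smorodinsky--Winternitz oscillator. -/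
/-!
Abstractly, `Y` is the Hamiltonian vector field of a constant of motion `I` that Poisson-commutes
with the Hamiltonians of `X₁, X₂, X₃`. Here the brackets are computed directly: `X₁` and `X₂` are
linear, so `[Y, Xᵢ](z) = Xᵢ (Y z) - DY(z)(Xᵢ z)`, and everything reduces to the Jacobians of `Y`
and `X₃`, obtained by the chain rule. Each bracket then vanishes by a rational identity valid
wherever `x₁ x₂ ≠ 0`.
-/

/-- The Lie bracket of two differentiable vector fields on a real normed space:
`[A,B](z) = DB(z)(A(z)) − DA(z)(B(z))`. -/
noncomputable def vfBracket {E : Type*} [NormedAddCommGroup E]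
    [NormedSpace ℝ E] (A B : E → E) (z : E) : E :=
  fderiv ℝ B z (A z) - fderiv ℝ A z (B z)

theorem HasFDerivAt.fun_div {𝕜 E : Type*} [NontriviallyNormedField 𝕜] [NormedAddCommGroup E]
    [NormedSpace 𝕜 E] {c d : E → 𝕜} {c' d' : E →L[𝕜] 𝕜} {x : E}
    (hc : HasFDerivAt c c' x) (hd : HasFDerivAt d d' x) (hx : d x ≠ 0) :
    HasFDerivAt (fun y => c y / d y) ((d x ^ 2)⁻¹ • (d x • c' - c x • d')) x := by
  have hinv : HasFDerivAt (fun y => (d y)⁻¹) (-(d x ^ 2)⁻¹ • d') x :=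
    (hasDerivAt_inv hx).comp_hasFDerivAt x hd
  simp only [div_eq_mul_inv]
  refine (hc.fun_mul hinv).congr_fderiv ?_
  ext v
  simp only [add_apply, smul_apply, smul_eq_mul, neg_mul, mul_neg, sub_apply]
  field_simp
  ring

theorem vfBracket_clm_right {E : Type*} [NormedAddCommGroup E] [NormedSpace ℝ E]
    (A : E → E) (L : E →L[ℝ] E) (z : E) :
    vfBracket A L z = L (A z) - fderiv ℝ A z (L z) := by
  rw [vfBracket, L.fderiv]

namespace SmorodinskyWinternitz

open ContinuousLinearMap

abbrev Phase := (ℝ × ℝ) × (ℝ × ℝ)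

def X₁ : Phase →L[ℝ] Phase := -(inr ℝ (ℝ × ℝ) (ℝ × ℝ)).comp (fst ℝ (ℝ × ℝ) (ℝ × ℝ))

noncomputable def X₂ : Phase →L[ℝ] Phase :=
  (2⁻¹ : ℝ) • (-ContinuousLinearMap.id ℝ (ℝ × ℝ)).prodMap (ContinuousLinearMap.id ℝ (ℝ × ℝ))

noncomputable def X₃ (k : ℝ) (z : Phase) : Phase := ((z.2.1, z.2.2), (k / z.1.1 ^ 3, k / z.1.2 ^ 3))

def angMom (z : Phase) : ℝ := z.1.1 * z.2.2 - z.2.1 * z.1.2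

-- `(-∂I/∂p, ∂I/∂x)` for `I = angMom² + k ((x₁/x₂)² + (x₂/x₁)²)`.
noncomputable def Y (k : ℝ) (z : Phase) : Phase :=
  ((2 * angMom z * z.1.2, -(2 * angMom z * z.1.1)),
   (2 * (angMom z * z.2.2 + k * (z.1.1 ^ 4 - z.1.2 ^ 4) / (z.1.1 ^ 3 * z.1.2 ^ 2)),
    -(2 * (angMom z * z.2.1 + k * (z.1.1 ^ 4 - z.1.2 ^ 4) / (z.1.2 ^ 3 * z.1.1 ^ 2)))))

theorem X₁_apply (z : Phase) : X₁ z = ((0, 0), (-z.1.1, -z.1.2)) := by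
  ext <;> simp [X₁]

theorem X₂_apply (z : Phase) : X₂ z = ((-z.1.1 / 2, -z.1.2 / 2), (z.2.1 / 2, z.2.2 / 2)) := by
  ext <;> simp [X₂, div_eq_inv_mul]

theorem hasFDerivAt_x₁ (z : Phase) :
    HasFDerivAt (fun w : Phase => w.1.1) (fst ℝ ℝ ℝ ∘L fst ℝ (ℝ × ℝ) (ℝ × ℝ)) z :=
  hasFDerivAt_fst.fst

theorem hasFDerivAt_x₂ (z : Phase) :
    HasFDerivAt (fun w : Phase => w.1.2) (snd ℝ ℝ ℝ ∘L fst ℝ (ℝ × ℝ) (ℝ × ℝ)) z :=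
  hasFDerivAt_fst.snd

theorem hasFDerivAt_p₁ (z : Phase) :
    HasFDerivAt (fun w : Phase => w.2.1) (fst ℝ ℝ ℝ ∘L snd ℝ (ℝ × ℝ) (ℝ × ℝ)) z :=
  hasFDerivAt_snd.fst

theorem hasFDerivAt_p₂ (z : Phase) :
    HasFDerivAt (fun w : Phase => w.2.2) (snd ℝ ℝ ℝ ∘L snd ℝ (ℝ × ℝ) (ℝ × ℝ)) z :=
  hasFDerivAt_snd.snd

theorem fderiv_angMom_apply (z v : Phase) :
    fderiv ℝ angMom z v = v.1.1 * z.2.2 + z.1.1 * v.2.2 - (v.2.1 * z.1.2 + z.2.1 * v.1.2) := by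
  have h : HasFDerivAt angMom _ z := ((hasFDerivAt_x₁ z).fun_mul (hasFDerivAt_p₂ z)).fun_sub
    ((hasFDerivAt_p₁ z).fun_mul (hasFDerivAt_x₂ z))
  rw [h.fderiv]
  simp only [sub_apply, add_apply, smul_apply, comp_apply, coe_snd', smul_eq_mul, coe_fst']
  ring

theorem differentiable_angMom : Differentiable ℝ angMom := by
  unfold angMom
  fun_prop

variable {k : ℝ} {z : Phase}

theorem fderiv_X₃_apply (hz₁ : z.1.1 ≠ 0) (hz₂ : z.1.2 ≠ 0) (v : Phase) :
    fderiv ℝ (X₃ k) z v =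
      ((v.2.1, v.2.2), (-(3 * k * v.1.1 / z.1.1 ^ 4), -(3 * k * v.1.2 / z.1.2 ^ 4))) := by
  have h : HasFDerivAt (X₃ k) _ z := ((hasFDerivAt_p₁ z).prodMk (hasFDerivAt_p₂ z)).prodMk
    (((hasFDerivAt_const k z).fun_div ((hasFDerivAt_x₁ z).pow 3) (pow_ne_zero 3 hz₁)).prodMk
      ((hasFDerivAt_const k z).fun_div ((hasFDerivAt_x₂ z).pow 3) (pow_ne_zero 3 hz₂)))
  rw [h.fderiv]
  simp only [smul_zero, Nat.add_one_sub_one, nsmul_eq_mul, Nat.cast_ofNat, zero_sub, smul_neg,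
    ContinuousLinearMap.prod_apply, comp_apply, coe_snd', coe_fst', Prod.mk.eta, neg_apply,
    smul_apply, smul_eq_mul, Prod.mk.injEq, neg_inj, true_and]
  constructor <;> field_simp

-- The `k`-terms are the Hessian of `((x₁/x₂)² + (x₂/x₁)²) / 2` applied to `(v.1.1, v.1.2)`.
theorem fderiv_Y_apply (hz₁ : z.1.1 ≠ 0) (hz₂ : z.1.2 ≠ 0) (v : Phase) :
    fderiv ℝ (Y k) z v =
      ((2 * (fderiv ℝ angMom z v * z.1.2 + angMom z * v.1.2),
        -(2 * (fderiv ℝ angMom z v * z.1.1 + angMom z * v.1.1))),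
       (2 * (fderiv ℝ angMom z v * z.2.2 + angMom z * v.2.2 +
          k * (v.1.1 * (1 / z.1.2 ^ 2 + 3 * z.1.2 ^ 2 / z.1.1 ^ 4) -
            2 * v.1.2 * (z.1.1 / z.1.2 ^ 3 + z.1.2 / z.1.1 ^ 3))),
        -(2 * (fderiv ℝ angMom z v * z.2.1 + angMom z * v.2.1 +
          k * (2 * v.1.1 * (z.1.1 / z.1.2 ^ 3 + z.1.2 / z.1.1 ^ 3) -
            v.1.2 * (1 / z.1.1 ^ 2 + 3 * z.1.1 ^ 2 / z.1.2 ^ 4)))))) := by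
  have hx₁ := hasFDerivAt_x₁ z
  have hx₂ := hasFDerivAt_x₂ z
  have hp₁ := hasFDerivAt_p₁ z
  have hp₂ := hasFDerivAt_p₂ z
  have hL := (differentiable_angMom z).hasFDerivAt
  have hq := ((hx₁.pow 4).fun_sub (hx₂.pow 4)).const_mul k
  have hq₁ := hq.fun_div ((hx₁.pow 3).fun_mul (hx₂.pow 2)) (by positivity)
  have hq₂ := hq.fun_div ((hx₂.pow 3).fun_mul (hx₁.pow 2)) (by positivity)
  have h : HasFDerivAt (Y k) _ z :=
    (((hL.const_mul 2).fun_mul hx₂).prodMk ((hL.const_mul 2).fun_mul hx₁).fun_neg).prodMk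
      ((((hL.fun_mul hp₂).fun_add hq₁).const_mul 2).prodMk
        (((hL.fun_mul hp₁).fun_add hq₂).const_mul 2).fun_neg)
  rw [h.fderiv]
  simp only [neg_add_rev, Nat.add_one_sub_one, nsmul_eq_mul, Nat.cast_ofNat, pow_one, smul_add,
    ContinuousLinearMap.prod_apply, add_apply, smul_apply, comp_apply, coe_fst', coe_snd',
    smul_eq_mul, neg_apply, sub_apply, one_div, Prod.mk.injEq]
  refine ⟨⟨?_, ?_⟩, ?_, ?_⟩ <;> field_simp <;> ring

theorem vfBracket_Y_X₁ (hz₁ : z.1.1 ≠ 0) (hz₂ : z.1.2 ≠ 0) : vfBracket (Y k) X₁ z = 0 := by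
  rw [vfBracket_clm_right, fderiv_Y_apply hz₁ hz₂, fderiv_angMom_apply, X₁_apply, X₁_apply]
  simp only [Y, angMom, Prod.mk_sub_mk, Prod.mk_eq_zero]
  refine ⟨⟨?_, ?_⟩, ?_, ?_⟩ <;> field_simp <;> ring

theorem vfBracket_Y_X₂ (hz₁ : z.1.1 ≠ 0) (hz₂ : z.1.2 ≠ 0) : vfBracket (Y k) X₂ z = 0 := by
  rw [vfBracket_clm_right, fderiv_Y_apply hz₁ hz₂, fderiv_angMom_apply, X₂_apply, X₂_apply]
  simp only [Y, angMom, Prod.mk_sub_mk, Prod.mk_eq_zero]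
  refine ⟨⟨?_, ?_⟩, ?_, ?_⟩ <;> field_simp <;> ring

theorem vfBracket_Y_X₃ (hz₁ : z.1.1 ≠ 0) (hz₂ : z.1.2 ≠ 0) : vfBracket (Y k) (X₃ k) z = 0 := by
  rw [vfBracket, fderiv_Y_apply hz₁ hz₂, fderiv_angMom_apply, fderiv_X₃_apply hz₁ hz₂]
  simp only [Y, X₃, angMom, Prod.mk_sub_mk, Prod.mk_eq_zero]
  refine ⟨⟨?_, ?_⟩, ?_, ?_⟩ <;> field_simp <;> ring

end SmorodinskyWinternitz

/-- The Hamiltonian vector field `Y` of the constant of motion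
`I = (x₁p₂ − p₁x₂)² + k((x₁/x₂)² + (x₂/x₁)²)` commutes with the Vessiot–Guldberg vector
fields `X₁, X₂, X₃` of the two-dimensional Smorodinsky–Winternitz oscillator on the open
set where `x₁ ≠ 0` and `x₂ ≠ 0`: `Y` is a `t`-independent Lie symmetry of the system.
A point of `(ℝ×ℝ) × (ℝ×ℝ)` is written `((x₁,x₂),(p₁,p₂))`. -/
theorem smorodinsky_winternitz_lie_symmetry (k : ℝ)
    (X₁ X₂ X₃ Y : (ℝ × ℝ) × (ℝ × ℝ) → (ℝ × ℝ) × (ℝ × ℝ))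
    (hX₁ : ∀ z : (ℝ × ℝ) × (ℝ × ℝ), X₁ z = ((0, 0), (-z.1.1, -z.1.2)))
    (hX₂ : ∀ z : (ℝ × ℝ) × (ℝ × ℝ),
      X₂ z = ((-z.1.1 / 2, -z.1.2 / 2), (z.2.1 / 2, z.2.2 / 2)))
    (hX₃ : ∀ z : (ℝ × ℝ) × (ℝ × ℝ),
      X₃ z = ((z.2.1, z.2.2), (k / z.1.1 ^ 3, k / z.1.2 ^ 3)))
    (hY : ∀ z : (ℝ × ℝ) × (ℝ × ℝ),
      Y z = ((2 * (z.1.1 * z.2.2 - z.2.1 * z.1.2) * z.1.2,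
              -(2 * (z.1.1 * z.2.2 - z.2.1 * z.1.2) * z.1.1)),
             (2 * ((z.1.1 * z.2.2 - z.2.1 * z.1.2) * z.2.2 +
                k * (z.1.1 ^ 4 - z.1.2 ^ 4) / (z.1.1 ^ 3 * z.1.2 ^ 2)),
              -(2 * ((z.1.1 * z.2.2 - z.2.1 * z.1.2) * z.2.1 +
                k * (z.1.1 ^ 4 - z.1.2 ^ 4) / (z.1.2 ^ 3 * z.1.1 ^ 2))))))
    (z : (ℝ × ℝ) × (ℝ × ℝ)) (hz1 : z.1.1 ≠ 0) (hz2 : z.1.2 ≠ 0) :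
    vfBracket Y X₁ z = 0 ∧ vfBracket Y X₂ z = 0 ∧ vfBracket Y X₃ z = 0 := by
  open SmorodinskyWinternitz in
  · obtain rfl : X₁ = SmorodinskyWinternitz.X₁ := funext fun w => (hX₁ w).trans (X₁_apply w).symm
    obtain rfl : X₂ = SmorodinskyWinternitz.X₂ := funext fun w => (hX₂ w).trans (X₂_apply w).symm
    obtain rfl : X₃ = SmorodinskyWinternitz.X₃ k := funext hX₃
    obtain rfl : Y = SmorodinskyWinternitz.Y k := funext hY
    exact ⟨vfBracket_Y_X₁ hz1 hz2, vfBracket_Y_X₂ hz1 hz2, vfBracket_Y_X₃ hz1 hz2⟩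
end
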